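/- For every j = 1, …, n+1 one has Ñ_j + N_j + M_j = 0, where N_j = −[∏_{k=1}^{n}(ϑ_k − γ̂_j) · ∏_{k≠j} γ̂_k · ∏_{k=1}^{m}(γ̂_j + η_k) · ∏_{k=1}^{m+1} β̂_k] / [∏_{k=1}^{n} ϑ_k · ∏_{k≠j}(γ̂_k − γ̂_j) · ∏_{k=1}^{m} η_k · ∏_{k=1}^{m+1}(γ̂_j + β̂_k)], M_j = [∏_{k=1}^{m}(γ̂_j + η_k) · ∏_{k=1}^{n}(ϑ_k − γ̂_j) · ∏_{k=1}^{m+1} β̂_k · ∏_{k=1}^{n+1} γ̂_k] / [∏_{k=1}^{m} η_k · ∏_{k=1}^{n} ϑ_k · ∏_{k=1}^{m+1}(γ̂_j + β̃_k) · ∏_{k≠j}(γ̂_k − γ̂_j)] · ∑_{i=1}^{m+1} [∏_{k=1}^{m+1}(β̂_i − β̃_k)] / [β̂_i (β̂_i + γ̂_j) · ∏_{k≠i}(β̂_i − β̂_k)], and Ñ_j = [∏_{k=1}^{m+1} β̃_k · ∏_{k=1}^{n+1} γ̃_k · ∏_{k=1}^{m}(γ̂_j + η_k) · ∏_{k=1}^{n}(ϑ_k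 − γ̂_j)] / [∏_{k=1}^{m} η_k · ∏_{k=1}^{n} ϑ_k · ∏_{k=1}^{m+1}(γ̂_j + β̃_k) · ∏_{k≠j}(γ̂_k − γ̂_j)] · ∑_{i=1}^{n+1} [∏_{k=1, k≠j}^{n+1}(γ̂_k − γ̃_i)] / [γ̃_i · ∏_{k≠i}(γ̃_k − γ̃_i)]. -/

import Mathlib

/-!
Both sums are partial-fraction expansions evaluated off the nodes. The sum in `Ñ_j` expands
`∏_{k ≠ j} (γ̂_k - X) / ∏_k (γ̃_k - X)` at `X = 0`, giving `∏_{k ≠ j} γ̂_k / ∏_k γ̃_k`. The sum in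
`M_j` expands `∏_k (X - β̃_k) / (X (X + γ̂_j) ∏_k (X - β̂_k))`; subtracting `∏_k (X - β̂_k)` from the
numerator changes nothing at the nodes `β̂_i` and lowers the degree, and splitting
`1 / (X (X + γ̂_j))` then gives `(∏_k (γ̂_j + β̃_k) / ∏_k (γ̂_j + β̂_k) - ∏_k β̃_k / ∏_k β̂_k) / γ̂_j`.
After factoring out the common `∏_k (γ̂_j + η_k) ∏_k (ϑ_k - γ̂_j) ∏_{k ≠ j} γ̂_k / (∏_k η_k ∏_k ϑ_k
∏_{k ≠ j} (γ̂_k - γ̂_j))`, the three coefficients become `∏ β̃ / ∏ (γ̂_j + β̃)`,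
`-∏ β̂ / ∏ (γ̂_j + β̂)` and `∏ β̂ / ∏ (γ̂_j + β̂) - ∏ β̃ / ∏ (γ̂_j + β̃)`.
-/

open Polynomial Finset

namespace Lagrange

variable {F ι : Type*} [Field F] [DecidableEq ι] {s : Finset ι} {v : ι → F}

theorem prod_erase_sub_ne_zero (hvs : Set.InjOn v s) {i : ι} (hi : i ∈ s) :
    ∏ k ∈ s.erase i, (v i - v k) ≠ 0 :=
  prod_ne_zero_iff.mpr fun _ hk =>
    sub_ne_zero.mpr fun h => (mem_erase.mp hk).1 (hvs (mem_erase.mp hk).2 hi h.symm)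

/-- Partial fractions for `f / nodal s v`: the first barycentric form of the interpolant of `f`. -/
theorem eval_div_eval_nodal {f : F[X]} {x : F} (hvs : Set.InjOn v s) (hf : f.degree < #s)
    (hx : ∀ i ∈ s, x ≠ v i) :
    f.eval x / (nodal s v).eval x =
      ∑ i ∈ s, f.eval (v i) / ((x - v i) * ∏ k ∈ s.erase i, (v i - v k)) := by
  conv_lhs => rw [eq_interpolate hvs hf]
  rw [eval_interpolate_not_at_node _ hx, mul_div_cancel_left₀ _ (eval_nodal_not_at_node hx)]
  refine sum_congr rfl fun i _ => ?_
  rw [nodalWeight, prod_inv_distrib, div_eq_mul_inv, mul_inv]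
  ring

theorem sum_eval_nodal_div_sub_mul_sub (u : ι → F) {c d : F} (hvs : Set.InjOn v s)
    (hc : ∀ i ∈ s, c ≠ v i) (hd : ∀ i ∈ s, d ≠ v i) (hcd : c ≠ d) :
    ∑ i ∈ s, (nodal s u).eval (v i) / ((v i - c) * (v i - d) * ∏ k ∈ s.erase i, (v i - v k)) =
      ((nodal s u).eval d / (nodal s v).eval d - (nodal s u).eval c / (nodal s v).eval c) /
        (c - d) := by
  -- `r` agrees with `nodal s u` at the nodes but has degree `< #s`, so partial fractions apply.
  set r := nodal s u - nodal s v
  have hr : r.degree < #s := by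
    rw [← degree_nodal (v := u)]
    exact degree_sub_lt_left (by rw [degree_nodal, degree_nodal]) nodal_ne_zero
      (by rw [nodal_monic.leadingCoeff, nodal_monic.leadingCoeff])
  have hr_div : ∀ x, (∀ i ∈ s, x ≠ v i) →
      r.eval x / (nodal s v).eval x = (nodal s u).eval x / (nodal s v).eval x - 1 := by
    intro x hx
    rw [eval_sub, sub_div, div_self (eval_nodal_not_at_node hx)]
  rw [← sub_sub_sub_cancel_right _ _ 1, ← hr_div d hd, ← hr_div c hc,
    eval_div_eval_nodal hvs hr hc, eval_div_eval_nodal hvs hr hd, ← sum_sub_distrib, sum_div]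
  refine sum_congr rfl fun i hi => ?_
  have hci : c - v i ≠ 0 := sub_ne_zero.mpr (hc i hi)
  have hdi : d - v i ≠ 0 := sub_ne_zero.mpr (hd i hi)
  have hic : v i - c ≠ 0 := sub_ne_zero.mpr (hc i hi).symm
  have hid : v i - d ≠ 0 := sub_ne_zero.mpr (hd i hi).symm
  have hcd' : c - d ≠ 0 := sub_ne_zero.mpr hcd
  have hP := prod_erase_sub_ne_zero hvs hi
  rw [eval_sub, eval_nodal_at_node hi, sub_zero]
  field_simp
  ring

end Lagrange

section

variable {F ι : Type*} [Field F] [DecidableEq ι] {s : Finset ι}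

theorem sum_prod_sub_div_mul_add_mul_prod_erase_sub {u v : ι → F} {g : F}
    (hvs : Set.InjOn v s) (hv : ∀ i ∈ s, v i ≠ 0) (hvg : ∀ i ∈ s, v i + g ≠ 0) (hg : g ≠ 0) :
    ∑ i ∈ s, (∏ k ∈ s, (v i - u k)) / (v i * (v i + g) * ∏ k ∈ s.erase i, (v i - v k)) =
      ((∏ k ∈ s, (g + u k)) / (∏ k ∈ s, (g + v k)) - (∏ k ∈ s, u k) / ∏ k ∈ s, v k) / g := by
  have key := Lagrange.sum_eval_nodal_div_sub_mul_sub u hvs (c := 0) (d := -g)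
    (fun i hi => (hv i hi).symm) (fun i hi h => hvg i hi (by rw [← h, neg_add_cancel]))
    (neg_ne_zero.mpr hg).symm
  simp only [Lagrange.eval_nodal, sub_zero, sub_neg_eq_add] at key
  rw [key, ← prod_div_distrib, ← prod_div_distrib, ← prod_div_distrib, ← prod_div_distrib]
  congr 2
  · exact prod_congr rfl fun k _ => by rw [← neg_add', ← neg_add', neg_div_neg_eq]
  · exact prod_congr rfl fun k _ => by rw [zero_sub, zero_sub, neg_div_neg_eq]
  · ring

theorem sum_prod_sub_div_mul_prod_erase_sub {κ : Type*} {t : Finset κ} {v : ι → F} (w : κ → F)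
    (hvs : Set.InjOn v s) (hv : ∀ i ∈ s, v i ≠ 0) (hts : #t < #s) :
    ∑ i ∈ s, (∏ k ∈ t, (w k - v i)) / (v i * ∏ k ∈ s.erase i, (v k - v i)) =
      (∏ k ∈ t, w k) / ∏ k ∈ s, v k := by
  -- With the nodes `-v`, the differences `(-v i) - (-v k)` become `v k - v i`.
  have key := Lagrange.eval_div_eval_nodal (s := s) (v := -v) (f := Lagrange.nodal t (-w)) (x := 0)
    (neg_injective.comp_injOn hvs) (by rwa [Lagrange.degree_nodal, Nat.cast_lt])
    (fun i hi => by simpa [eq_comm] using hv i hi)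
  simpa only [Lagrange.eval_nodal, Pi.neg_apply, zero_sub, neg_neg, neg_sub_neg] using key.symm

end

section Interlacing

variable {α : Type*} [Preorder α] {m : ℕ} {β : Fin (m + 1) → α} {η : Fin m → α}

theorem strictMono_of_interlacing (h : ∀ k : Fin m, β k.castSucc < η k ∧ η k < β k.succ) :
    StrictMono β :=
  Fin.strictMono_iff_lt_succ.mpr fun k => (h k).1.trans (h k).2

theorem pos_of_interlacing [Zero α] (h0 : 0 < β 0)
    (h : ∀ k : Fin m, β k.castSucc < η k ∧ η k < β k.succ) :
    (∀ k, 0 < β k) ∧ ∀ k, 0 < η k := by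
  have hβ k : 0 < β k := h0.trans_le ((strictMono_of_interlacing h).monotone (Fin.zero_le k))
  exact ⟨hβ, fun k => (hβ _).trans (h k).1⟩

end Interlacing

theorem stmt_16_general (m n : ℕ)
    (η : Fin m → ℝ) (ϑ : Fin n → ℝ)
    (βt : Fin (m + 1) → ℝ) (γt : Fin (n + 1) → ℝ)
    (βh : Fin (m + 1) → ℝ) (γh : Fin (n + 1) → ℝ)
    (hβt0 : 0 < βt 0)
    (hβtint : ∀ k : Fin m, βt k.castSucc < η k ∧ η k < βt k.succ)
    (hγt0 : 0 < γt 0)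
    (hγtint : ∀ k : Fin n, γt k.castSucc < ϑ k ∧ ϑ k < γt k.succ)
    (hβh0 : 0 < βh 0)
    (hβhint : ∀ k : Fin m, βh k.castSucc < η k ∧ η k < βh k.succ)
    (hγh0 : 0 < γh 0)
    (hγhint : ∀ k : Fin n, γh k.castSucc < ϑ k ∧ ϑ k < γh k.succ)
    (N : Fin (n + 1) → ℝ)
    (hN : ∀ j, N j =
      -(((∏ k, (ϑ k - γh j)) * (∏ k ∈ Finset.univ.erase j, γh k) *
          (∏ k, (γh j + η k)) * (∏ k, βh k)) /
        ((∏ k, ϑ k) * (∏ k ∈ Finset.univ.erase j, (γh k - γh j)) *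
          (∏ k, η k) * (∏ k, (γh j + βh k)))))
    (M : Fin (n + 1) → ℝ)
    (hM : ∀ j, M j =
      (((∏ k, (γh j + η k)) * (∏ k, (ϑ k - γh j)) * (∏ k, βh k) * (∏ k, γh k)) /
        ((∏ k, η k) * (∏ k, ϑ k) * (∏ k, (γh j + βt k)) *
          (∏ k ∈ Finset.univ.erase j, (γh k - γh j)))) *
      (∑ i : Fin (m + 1), (∏ k, (βh i - βt k)) /
        (βh i * (βh i + γh j) * ∏ k ∈ Finset.univ.erase i, (βh i - βh k))))
    (Nt : Fin (n + 1) → ℝ)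
    (hNt : ∀ j, Nt j =
      (((∏ k, βt k) * (∏ k, γt k) * (∏ k, (γh j + η k)) * (∏ k, (ϑ k - γh j))) /
        ((∏ k, η k) * (∏ k, ϑ k) * (∏ k, (γh j + βt k)) *
          (∏ k ∈ Finset.univ.erase j, (γh k - γh j)))) *
      (∑ i : Fin (n + 1), (∏ k ∈ Finset.univ.erase j, (γh k - γt i)) /
        (γt i * ∏ k ∈ Finset.univ.erase i, (γt k - γt i)))) :
    ∀ j : Fin (n + 1), Nt j + N j + M j = 0 := by
  intro j
  obtain ⟨hβt, hη⟩ := pos_of_interlacing hβt0 hβtint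
  obtain ⟨hβh, -⟩ := pos_of_interlacing hβh0 hβhint
  obtain ⟨hγt, hϑ⟩ := pos_of_interlacing hγt0 hγtint
  obtain ⟨hγh, -⟩ := pos_of_interlacing hγh0 hγhint
  have hg := hγh j
  rw [hNt j, hN j, hM j,
    sum_prod_sub_div_mul_add_mul_prod_erase_sub (strictMono_of_interlacing hβhint).injective.injOn
      (fun i _ => (hβh i).ne') (fun i _ => (add_pos (hβh i) hg).ne') hg.ne',
    sum_prod_sub_div_mul_prod_erase_sub γh (strictMono_of_interlacing hγtint).injective.injOn
      (fun i _ => (hγt i).ne') (card_erase_lt_of_mem (mem_univ j)),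
    ← mul_prod_erase univ γh (mem_univ j)]
  have hD : ∏ k ∈ univ.erase j, (γh k - γh j) ≠ 0 := prod_ne_zero_iff.mpr fun k hk =>
    sub_ne_zero.mpr ((strictMono_of_interlacing hγhint).injective.ne (mem_erase.mp hk).1)
  have hη' : ∏ k, η k ≠ 0 := (prod_pos fun k _ => hη k).ne'
  have hϑ' : ∏ k, ϑ k ≠ 0 := (prod_pos fun k _ => hϑ k).ne'
  have hβh' : ∏ k, βh k ≠ 0 := (prod_pos fun k _ => hβh k).ne'
  have hγt' : ∏ k, γt k ≠ 0 := (prod_pos fun k _ => hγt k).ne'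
  have hβtg : ∏ k, (γh j + βt k) ≠ 0 := (prod_pos fun k _ => add_pos hg (hβt k)).ne'
  have hβhg : ∏ k, (γh j + βh k) ≠ 0 := (prod_pos fun k _ => add_pos hg (hβh k)).ne'
  field_simp
  ring

/-- Second family of identities in (C.15), from the proof of Corollary 3.2:
`Ñ_j + N_j + M_j = 0` for `j = 1, …, n+1`, where `N_j` is the coefficient from (3.5),
and `M_j`, `Ñ_j` are the coefficients `M_j^1` from (3.24) and `Ñ_j^1` from (3.27)
evaluated at `y = b_1`. -/
theorem stmt_16 (m n : ℕ) (hm : 1 ≤ m) (hn : 1 ≤ n)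
    (η : Fin m → ℝ) (ϑ : Fin n → ℝ)
    (βt : Fin (m + 1) → ℝ) (γt : Fin (n + 1) → ℝ)
    (βh : Fin (m + 1) → ℝ) (γh : Fin (n + 1) → ℝ)
    (hβt0 : 0 < βt 0)
    (hβtint : ∀ k : Fin m, βt k.castSucc < η k ∧ η k < βt k.succ)
    (hγt0 : 0 < γt 0)
    (hγtint : ∀ k : Fin n, γt k.castSucc < ϑ k ∧ ϑ k < γt k.succ)
    (hβh0 : 0 < βh 0)
    (hβhint : ∀ k : Fin m, βh k.castSucc < η k ∧ η k < βh k.succ)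
    (hγh0 : 0 < γh 0)
    (hγhint : ∀ k : Fin n, γh k.castSucc < ϑ k ∧ ϑ k < γh k.succ)
    (N : Fin (n + 1) → ℝ)
    (hN : ∀ j, N j =
      -(((∏ k, (ϑ k - γh j)) * (∏ k ∈ Finset.univ.erase j, γh k) *
          (∏ k, (γh j + η k)) * (∏ k, βh k)) /
        ((∏ k, ϑ k) * (∏ k ∈ Finset.univ.erase j, (γh k - γh j)) *
          (∏ k, η k) * (∏ k, (γh j + βh k)))))
    (M : Fin (n + 1) → ℝ)
    (hM : ∀ j, M j =
      (((∏ k, (γh j + η k)) * (∏ k, (ϑ k - γh j)) * (∏ k, βh k) * (∏ k, γh k)) /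
        ((∏ k, η k) * (∏ k, ϑ k) * (∏ k, (γh j + βt k)) *
          (∏ k ∈ Finset.univ.erase j, (γh k - γh j)))) *
      (∑ i : Fin (m + 1), (∏ k, (βh i - βt k)) /
        (βh i * (βh i + γh j) * ∏ k ∈ Finset.univ.erase i, (βh i - βh k))))
    (Nt : Fin (n + 1) → ℝ)
    (hNt : ∀ j, Nt j =
      (((∏ k, βt k) * (∏ k, γt k) * (∏ k, (γh j + η k)) * (∏ k, (ϑ k - γh j))) /
        ((∏ k, η k) * (∏ k, ϑ k) * (∏ k, (γh j + βt k)) *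
          (∏ k ∈ Finset.univ.erase j, (γh k - γh j)))) *
      (∑ i : Fin (n + 1), (∏ k ∈ Finset.univ.erase j, (γh k - γt i)) /
        (γt i * ∏ k ∈ Finset.univ.erase i, (γt k - γt i)))) :
    ∀ j : Fin (n + 1), Nt j + N j + M j = 0 :=
  stmt_16_general m n η ϑ βt γt βh γh hβt0 hβtint hγt0 hγtint hβh0 hβhint hγh0 hγhint N hN M hM Nt
    hNt
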